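/- Fix μ ∈ ℝ, ξ > 0 and x ∈ ℝ, and define V^ξ(t,r) = ξ·∫_t^T M(s−t, r) ds + M(T−t, r)·(x + (μ−ξ)(T−t)) on [0,T] × ℝ. Then for every (t,r) ∈ (0,T) × ℝ, ∂_t V^ξ(t,r) + a(b−r)·∂_r V^ξ(t,r) + (δ²/2)·∂_{rr} V^ξ(t,r) − r·V^ξ(t,r) + μ·M(T−t,r) + ξ·(1 − M(T−t,r)) = 0. -/

import Mathlib

/-!
`M(u, r)` is the Vasicek bond price `E[exp(-∫₀ᵘ r_s ds) | r₀ = r]`, so it solves the backward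
Kolmogorov equation `∂ᵤM = a(b − r)∂ᵣM + (δ²/2)∂ᵣᵣM − rM` with `M(0, ·) = 1`; with
`B(u) = (1 − e^{−au})/a` one has `∂ᵣM = −B M` and `∂ᵣᵣM = B² M`. Writing
`V^ξ(t, r) = ξ ∫₀^{T−t} M(u, r) du + M(T − t, r) c(t)` with `c(t) = x + (μ − ξ)(T − t)`,
the generator applied to the integral term integrates `∂ᵤM`, giving `ξ (M(T − t, r) − 1)`,
and applied to the second term it cancels `−∂ᵤM(T − t, r) c(t)` from `∂ₜV^ξ`; what is left
is exactly `−μM(T − t, r) − ξ(1 − M(T − t, r))`.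
-/

open Real Filter MeasureTheory intervalIntegral

noncomputable def M (a δ b u r : ℝ) : ℝ :=
  Real.exp (-(b - δ^2/(2*a^2))*u + ((b - δ^2/(2*a^2)) - r)/a * (1 - Real.exp (-(a*u)))
    - δ^2/(4*a^3) * (1 - Real.exp (-(a*u)))^2)

/-- The return function of the strategy "always pay at the maximal rate ξ":
`V^ξ(t,r) = ξ·∫_t^T M(s−t,r) ds + M(T−t,r)(x + (μ−ξ)(T−t))`. -/
noncomputable def Vxi (a δ b T μ ξ x t r : ℝ) : ℝ :=
  ξ * (∫ s in t..T, M a δ b (s - t) r) + M a δ b (T - t) r * (x + (μ - ξ)*(T - t))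

open Function

theorem hasDerivAt_intervalIntegral_of_continuous {E : Type*} [NormedAddCommGroup E]
    [NormedSpace ℝ E] {F F' : ℝ → ℝ → E} (hF : Continuous (uncurry F))
    (hF' : Continuous (uncurry F')) (hd : ∀ x u, HasDerivAt (F · u) (F' x u) x)
    (a b x₀ : ℝ) :
    HasDerivAt (fun x => ∫ u in a..b, F x u) (∫ u in a..b, F' x₀ u) x₀ := by
  obtain ⟨C, hC⟩ := ((isCompact_closedBall x₀ 1).prod isCompact_uIcc).exists_bound_of_continuousOn
    hF'.continuousOn
  refine (hasDerivAt_integral_of_dominated_loc_of_deriv_le (bound := fun _ => C)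
    (Metric.ball_mem_nhds x₀ one_pos) ?_ ?_ ?_ ?_ intervalIntegrable_const ?_).2
  · exact .of_forall fun x => (hF.comp (Continuous.prodMk_right x)).aestronglyMeasurable
  · exact (hF.comp (Continuous.prodMk_right x₀)).intervalIntegrable a b
  · exact (hF'.comp (Continuous.prodMk_right x₀)).aestronglyMeasurable
  · exact .of_forall fun u hu x hx => hC (x, u) (Set.mk_mem_prod
      (Metric.ball_subset_closedBall hx) (Set.uIoc_subset_uIcc hu))
  · exact .of_forall fun u _ x _ => hd x u

section Kolmogorov

variable {K Kr Krr : ℝ → ℝ → ℝ} {β γ : ℝ → ℝ}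

theorem integral_kolmogorov (hK : Continuous (uncurry K)) (hKr : Continuous (uncurry Kr))
    (hKrr : Continuous (uncurry Krr))
    (hK_u : ∀ u r, HasDerivAt (K · r) (β r * Kr u r + γ r * Krr u r - r * K u r) u) (y r : ℝ) :
    β r * (∫ u in 0..y, Kr u r) + γ r * (∫ u in 0..y, Krr u r) - r * (∫ u in 0..y, K u r)
      = K y r - K 0 r := by
  have cont {G : ℝ → ℝ → ℝ} (hG : Continuous (uncurry G)) : Continuous (G · r) :=
    hG.comp (Continuous.prodMk_left r)
  have int {G : ℝ → ℝ → ℝ} (hG : Continuous (uncurry G)) (c : ℝ) :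
      IntervalIntegrable (fun u => c * G u r) volume 0 y :=
    (continuous_const.mul (cont hG)).intervalIntegrable 0 y
  simp only [← intervalIntegral.integral_const_mul]
  rw [← integral_add (int hKr _) (int hKrr _),
    ← integral_sub ((int hKr _).add (int hKrr _)) (int hK _)]
  exact integral_eq_sub_of_hasDerivAt (fun u _ => hK_u u r)
    ((((continuous_const.mul (cont hKr)).add (continuous_const.mul (cont hKrr))).sub
      (continuous_const.mul (cont hK))).intervalIntegrable 0 y)

theorem pde_of_kolmogorov (hK : Continuous (uncurry K)) (hKr : Continuous (uncurry Kr))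
    (hKrr : Continuous (uncurry Krr)) (hK_r : ∀ u r, HasDerivAt (K u) (Kr u r) r)
    (hKr_r : ∀ u r, HasDerivAt (Kr u) (Krr u r) r)
    (hK_u : ∀ u r, HasDerivAt (K · r) (β r * Kr u r + γ r * Krr u r - r * K u r) u)
    (hK_zero : ∀ r, K 0 r = 1) {T μ ξ x : ℝ} {V : ℝ → ℝ → ℝ}
    (hV : ∀ t r, V t r = ξ * (∫ u in 0..T - t, K u r) + K (T - t) r * (x + (μ - ξ) * (T - t)))
    (t r : ℝ) :
    deriv (fun t' => V t' r) t + β r * deriv (fun r' => V t r') r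
      + γ r * deriv (deriv fun r' => V t r') r - r * V t r
      + μ * K (T - t) r + ξ * (1 - K (T - t) r) = 0 := by
  have swap {G : ℝ → ℝ → ℝ} (hG : Continuous (uncurry G)) :
      Continuous (uncurry fun r u => G u r) := hG.comp continuous_swap
  have hV_r : ∀ r', HasDerivAt (fun r' => V t r')
      (ξ * (∫ u in 0..T - t, Kr u r') + Kr (T - t) r' * (x + (μ - ξ) * (T - t))) r' := by
    intro r'
    simp only [hV]
    exact ((hasDerivAt_intervalIntegral_of_continuous (swap hK) (swap hKr)
      (fun r u => hK_r u r) 0 (T - t) r').const_mul ξ).add ((hK_r _ _).mul_const _)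
  have hV_rr : HasDerivAt (deriv fun r' => V t r')
      (ξ * (∫ u in 0..T - t, Krr u r) + Krr (T - t) r * (x + (μ - ξ) * (T - t))) r := by
    rw [funext fun r' => (hV_r r').deriv]
    exact ((hasDerivAt_intervalIntegral_of_continuous (swap hKr) (swap hKrr)
      (fun r u => hKr_r u r) 0 (T - t) r).const_mul ξ).add ((hKr_r _ _).mul_const _)
  have hV_t : HasDerivAt (fun t' => V t' r)
      (ξ * -K (T - t) r + (-(β r * Kr (T - t) r + γ r * Krr (T - t) r - r * K (T - t) r)
        * (x + (μ - ξ) * (T - t)) + K (T - t) r * -(μ - ξ))) t := by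
    have h_sub : HasDerivAt (fun t' : ℝ => T - t') (-1) t := by
      simpa using (hasDerivAt_id t).const_sub T
    have h_prim : HasDerivAt (fun t' => ∫ u in 0..T - t', K u r) (-K (T - t) r) t := by
      simpa [comp_def] using ((hK.comp (Continuous.prodMk_left r)).integral_hasStrictDerivAt
        0 (T - t)).hasDerivAt.comp t h_sub
    have h_coef : HasDerivAt (fun t' : ℝ => x + (μ - ξ) * (T - t')) (-(μ - ξ)) t := by
      simpa using (h_sub.const_mul (μ - ξ)).const_add x
    have h_K : HasDerivAt (fun t' => K (T - t') r)
        (-(β r * Kr (T - t) r + γ r * Krr (T - t) r - r * K (T - t) r)) t := by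
      simpa [comp_def] using (hK_u (T - t) r).comp t h_sub
    simp only [hV]
    exact (h_prim.const_mul ξ).add (h_K.mul h_coef)
  rw [hV_t.deriv, (hV_r r).deriv, hV_rr.deriv, hV t r]
  linear_combination ξ * integral_kolmogorov hK hKr hKrr hK_u (T - t) r - ξ * hK_zero r

end Kolmogorov

noncomputable def vasicekB (a u : ℝ) : ℝ := (1 - exp (-(a * u))) / a

theorem hasDerivAt_M_rate (a δ b u r : ℝ) :
    HasDerivAt (M a δ b u) (-vasicekB a u * M a δ b u r) r := by
  have h_exp : HasDerivAt (fun r => -(b - δ^2/(2*a^2))*u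
      + ((b - δ^2/(2*a^2)) - r)/a * (1 - exp (-(a*u))) - δ^2/(4*a^3) * (1 - exp (-(a*u)))^2)
      (-vasicekB a u) r := by
    refine ((((hasDerivAt_id r).const_sub _).div_const a).mul_const _).const_add _
      |>.sub_const _ |>.congr_deriv ?_
    simp only [vasicekB]
    ring
  rw [mul_comm]
  exact h_exp.exp

theorem hasDerivAt_M_horizon {a : ℝ} (ha : a ≠ 0) (δ b u r : ℝ) :
    HasDerivAt (M a δ b · r) (a * (b - r) * (-vasicekB a u * M a δ b u r)
      + δ^2/2 * (vasicekB a u ^ 2 * M a δ b u r) - r * M a δ b u r) u := by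
  have he : HasDerivAt (fun u => 1 - exp (-(a * u))) (a * exp (-(a * u))) u := by
    simpa [mul_comm] using (((hasDerivAt_id u).const_mul a).neg.exp).const_sub 1
  have h_exp : HasDerivAt (fun u => -(b - δ^2/(2*a^2))*u
      + ((b - δ^2/(2*a^2)) - r)/a * (1 - exp (-(a*u))) - δ^2/(4*a^3) * (1 - exp (-(a*u)))^2)
      (-(b - δ^2/(2*a^2)) + ((b - δ^2/(2*a^2)) - r) * exp (-(a*u))
        - δ^2/(2*a^2) * (1 - exp (-(a*u))) * exp (-(a*u))) u := by
    refine (((hasDerivAt_id u).const_mul _).add (he.const_mul _)).sub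
      ((he.pow 2).const_mul _) |>.congr_deriv ?_
    field_simp
    ring
  refine h_exp.exp.congr_deriv ?_
  change M a δ b u r * _ = _
  simp only [vasicekB]
  field_simp
  ring

theorem continuous_M (a δ b : ℝ) : Continuous (uncurry (M a δ b)) := by
  unfold M; fun_prop

theorem continuous_comp_vasicekB_mul_M (a δ b : ℝ) {f : ℝ → ℝ} (hf : Continuous f) :
    Continuous (uncurry fun u r => f (vasicekB a u) * M a δ b u r) := by
  unfold vasicekB M; fun_prop

theorem Vxi_eq (a δ b T μ ξ x t r : ℝ) :
    Vxi a δ b T μ ξ x t r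
      = ξ * (∫ u in 0..T - t, M a δ b u r) + M a δ b (T - t) r * (x + (μ - ξ) * (T - t)) := by
  rw [Vxi, integral_comp_sub_right (M a δ b · r) t, sub_self]

theorem Vxi_solves_pde_general (a δ b T μ ξ x : ℝ) (ha : 0 < a) :
    ∀ t : ℝ, 0 < t → t < T → ∀ r : ℝ,
      deriv (fun t' => Vxi a δ b T μ ξ x t' r) t
        + a*(b - r) * deriv (fun r' => Vxi a δ b T μ ξ x t r') r
        + δ^2/2 * deriv (deriv (fun r' => Vxi a δ b T μ ξ x t r')) r
        - r * Vxi a δ b T μ ξ x t r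
        + μ * M a δ b (T - t) r + ξ * (1 - M a δ b (T - t) r) = 0 := by
  intro t _ _ r
  have hMr_r : ∀ u r, HasDerivAt (fun r => -vasicekB a u * M a δ b u r)
      (vasicekB a u ^ 2 * M a δ b u r) r := fun u r =>
    ((hasDerivAt_M_rate a δ b u r).const_mul _).congr_deriv (by ring)
  exact pde_of_kolmogorov (β := fun r => a * (b - r)) (γ := fun _ => δ^2/2)
    (continuous_M a δ b) (continuous_comp_vasicekB_mul_M a δ b continuous_neg)
    (continuous_comp_vasicekB_mul_M a δ b (continuous_pow 2)) (hasDerivAt_M_rate a δ b) hMr_r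
    (hasDerivAt_M_horizon ha.ne' δ b) (fun r => by simp [M]) (Vxi_eq a δ b T μ ξ x) t r

/-- `V^ξ` satisfies
`∂_t V^ξ + a(b−r)∂_r V^ξ + (δ²/2)∂_{rr} V^ξ − rV^ξ + μM(T−t,r) + ξ(1 − M(T−t,r)) = 0`
on `(0,T) × ℝ`. -/
theorem Vxi_solves_pde (a δ b T μ ξ x : ℝ) (ha : 0 < a) (hδ : 0 < δ) (hT : 0 < T)
    (hξ : 0 < ξ) :
    ∀ t : ℝ, 0 < t → t < T → ∀ r : ℝ,
      deriv (fun t' => Vxi a δ b T μ ξ x t' r) t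
        + a*(b - r) * deriv (fun r' => Vxi a δ b T μ ξ x t r') r
        + δ^2/2 * deriv (deriv (fun r' => Vxi a δ b T μ ξ x t r')) r
        - r * Vxi a δ b T μ ξ x t r
        + μ * M a δ b (T - t) r + ξ * (1 - M a δ b (T - t) r) = 0 :=
  Vxi_solves_pde_general a δ b T μ ξ x ha
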